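/- Let α ≥ 0, d > 0, k > 0, h₀ > 0 and define f₁(x) = 1 / [ M(α/2 + 1/2, 1/2, x²) + 2(√d h₀/k) x M(α/2 + 1, 3/2, x²) ] for x > 0. Then f₁ is differentiable on (0,∞) with f₁'(x) = −[ 2(α+1) x M(α/2 + 3/2, 3/2, x²) + 2(√d/k) h₀ M(α/2 + 1, 1/2, x²) ] f₁(x)², and consequently f₁'(x) < 0 for all x > 0; i.e., f₁ is strictly decreasing on (0,∞). -/

import Mathlib

/-!
Write `f₁ = 1 / g`. Termwise differentiation gives `M'(a, b, z) = (a / b) M(a + 1, b + 1, z)`,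
and the contiguous relation `M(a, b, z) = M(a, b + 1, z) + a z / (b (b + 1)) M(a + 1, b + 2, z)`
at `b = 1 / 2` turns this into `(x M(a, 3/2, x²))' = M(a, 1/2, x²)`. Hence `g'` is a combination
of Kummer functions with positive coefficients; since `M(a, b, z) ≥ 1` for `a, z ≥ 0`, `b > 0`,
both `g` and `g'` are positive on `(0, ∞)`, and `f₁' = -g' / g² < 0`.
-/

open Real Filter Topology

/-- The Kummer confluent hypergeometric function `M(a,b,z)`, defined by its power series. -/
noncomputable def kummerM (a b z : ℝ) : ℝ :=
  ∑' s : ℕ, ((ascPochhammer ℝ s).eval a / ((ascPochhammer ℝ s).eval b * (Nat.factorial s : ℝ)))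
      * z ^ s

theorem ascPochhammer_succ_eval_left {S : Type*} [CommSemiring S] (n : ℕ) (x : S) :
    (ascPochhammer S (n + 1)).eval x = x * (ascPochhammer S n).eval (x + 1) := by
  simp [ascPochhammer_succ_left, Polynomial.eval_comp]

theorem ascPochhammer_eval_nonneg {S : Type*} [Semiring S] [PartialOrder S] [IsOrderedRing S]
    (n : ℕ) {x : S} (hx : 0 ≤ x) : 0 ≤ (ascPochhammer S n).eval x := by
  induction n with
  | zero => simp
  | succ n ih => rw [ascPochhammer_succ_eval]; positivity

theorem hasDerivAt_tsum_mul_pow {c : ℕ → ℝ}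
    (hc : ∀ R, Summable fun s : ℕ => ((s : ℝ) + 1) * c (s + 1) * R ^ s) (z : ℝ) :
    HasDerivAt (fun y => ∑' s, c s * y ^ s)
      (∑' s : ℕ, ((s : ℝ) + 1) * c (s + 1) * z ^ s) z := by
  have hderiv : ∀ R, Summable fun s : ℕ => c s * ((s : ℝ) * R ^ (s - 1)) := fun R => by
    rw [← summable_nat_add_iff 1]
    simpa [mul_comm, mul_left_comm, mul_assoc] using hc R
  set R := |z| + 1
  have hz : z ∈ Metric.ball (0 : ℝ) R := by simp [R]
  have hbound : ∀ (s : ℕ), ∀ y ∈ Metric.ball (0 : ℝ) R,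
      ‖c s * ((s : ℝ) * y ^ (s - 1))‖ ≤ ‖c s * ((s : ℝ) * R ^ (s - 1))‖ := by
    intro s y hy
    have hyR : |y| ≤ |R| := by
      rw [abs_of_pos (by positivity : 0 < R)]
      simpa using (mem_ball_zero_iff.mp hy).le
    simp only [norm_mul, norm_pow, Real.norm_eq_abs]
    gcongr
  have hderiv_tsum := hasDerivAt_tsum_of_isPreconnected (hderiv R).norm Metric.isOpen_ball
    (convex_ball 0 R).isPreconnected (fun s y _ => (hasDerivAt_pow s y).const_mul (c s))
    hbound (Metric.mem_ball_self (by positivity)) (summable_of_ne_finset_zero (s := {0})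
      (fun s hs => by simp_all)) hz
  rw [(hderiv z).tsum_eq_zero_add] at hderiv_tsum
  refine hderiv_tsum.congr_deriv ?_
  simp [mul_comm, mul_left_comm]

noncomputable def kummerCoeff (a b : ℝ) (s : ℕ) : ℝ :=
  (ascPochhammer ℝ s).eval a / ((ascPochhammer ℝ s).eval b * (Nat.factorial s : ℝ))

theorem kummerM_eq_tsum (a b z : ℝ) : kummerM a b z = ∑' s, kummerCoeff a b s * z ^ s := rfl

@[simp] theorem kummerCoeff_zero (a b : ℝ) : kummerCoeff a b 0 = 1 := by simp [kummerCoeff]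

section KummerSeries

variable {b : ℝ}

theorem kummerCoeff_nonneg {a : ℝ} (ha : 0 ≤ a) (hb : 0 < b) (s : ℕ) : 0 ≤ kummerCoeff a b s := by
  have := ascPochhammer_eval_nonneg s ha
  have := ascPochhammer_pos s b hb
  unfold kummerCoeff
  positivity

theorem kummerCoeff_succ (a : ℝ) (hb : 0 < b) (s : ℕ) :
    kummerCoeff a b (s + 1) = kummerCoeff a b s * ((a + s) / ((b + s) * (s + 1))) := by
  have := (ascPochhammer_pos s b hb).ne'
  simp only [kummerCoeff, ascPochhammer_succ_eval, Nat.factorial_succ, Nat.cast_mul,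
    Nat.cast_add, Nat.cast_one]
  field_simp

theorem succ_mul_kummerCoeff_succ (a : ℝ) (hb : 0 < b) (s : ℕ) :
    ((s : ℝ) + 1) * kummerCoeff a b (s + 1) = a / b * kummerCoeff (a + 1) (b + 1) s := by
  have := (ascPochhammer_pos s (b + 1) (by linarith)).ne'
  simp only [kummerCoeff, ascPochhammer_succ_eval_left, Nat.factorial_succ, Nat.cast_mul,
    Nat.cast_add, Nat.cast_one]
  field_simp

theorem kummerCoeff_succ_eq_add (a : ℝ) (hb : 0 < b) (s : ℕ) :
    kummerCoeff a b (s + 1) =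
      kummerCoeff a (b + 1) (s + 1) + a / (b * (b + 1)) * kummerCoeff (a + 1) (b + 2) s := by
  have hQ := (ascPochhammer_pos s (b + 2) (by linarith)).ne'
  have hP : (ascPochhammer ℝ s).eval (b + 1) =
      (b + 1) * (ascPochhammer ℝ s).eval (b + 2) / (b + 1 + s) := by
    rw [eq_div_iff (by positivity), ← ascPochhammer_succ_eval, ascPochhammer_succ_eval_left]
    ring_nf
  simp only [kummerCoeff, ascPochhammer_succ_eval_left, Nat.factorial_succ, Nat.cast_mul,
    Nat.cast_add, Nat.cast_one, hP, show b + 1 + 1 = b + 2 by ring]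
  field_simp
  ring

theorem summable_kummerCoeff_mul_pow (a : ℝ) (hb : 0 < b) (z : ℝ) :
    Summable fun s => kummerCoeff a b s * z ^ s := by
  refine summable_of_ratio_norm_eventually_le (r := 1 / 2) (by norm_num) ?_
  filter_upwards [eventually_ge_atTop ⌈max |a| (4 * |z|)⌉₊] with s hs
  have hN : max |a| (4 * |z|) ≤ s := Nat.ceil_le.mp hs
  have ha : |a + s| ≤ 2 * s := by
    have := abs_add_le a s
    rw [Nat.abs_cast] at this
    linarith [le_max_left |a| (4 * |z|)]
  have hratio : |a + s| / ((b + s) * (s + 1)) * |z| ≤ 1 / 2 := by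
    rw [div_mul_eq_mul_div, div_le_iff₀ (by positivity)]
    nlinarith [le_max_right |a| (4 * |z|), abs_nonneg z, abs_nonneg (a + s)]
  rw [kummerCoeff_succ a hb, pow_succ]
  have hden : |(b + s) * (s + 1)| = (b + s) * (s + 1) := abs_of_pos (by positivity)
  simp only [norm_mul, norm_div, norm_pow, Real.norm_eq_abs, ← abs_mul, hden]
  calc |kummerCoeff a b s| * (|a + s| / ((b + s) * (s + 1))) * (|z| ^ s * |z|)
      = |a + s| / ((b + s) * (s + 1)) * |z| * (|kummerCoeff a b s| * |z| ^ s) := by ring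
    _ ≤ 1 / 2 * (|kummerCoeff a b s| * |z| ^ s) := by gcongr

theorem one_le_kummerM {a : ℝ} (ha : 0 ≤ a) (hb : 0 < b) {z : ℝ} (hz : 0 ≤ z) :
    1 ≤ kummerM a b z := by
  simpa [kummerM_eq_tsum] using (summable_kummerCoeff_mul_pow a hb z).le_tsum 0
    (fun s _ => mul_nonneg (kummerCoeff_nonneg ha hb s) (pow_nonneg hz s))

theorem kummerM_pos {a : ℝ} (ha : 0 ≤ a) (hb : 0 < b) {z : ℝ} (hz : 0 ≤ z) : 0 < kummerM a b z :=
  one_pos.trans_le (one_le_kummerM ha hb hz)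

theorem hasDerivAt_kummerM (a : ℝ) (hb : 0 < b) (z : ℝ) :
    HasDerivAt (kummerM a b) (a / b * kummerM (a + 1) (b + 1) z) z := by
  have hshift : ∀ R : ℝ, (fun s : ℕ => ((s : ℝ) + 1) * kummerCoeff a b (s + 1) * R ^ s) =
      fun s => a / b * (kummerCoeff (a + 1) (b + 1) s * R ^ s) := fun R => by
    ext s
    rw [succ_mul_kummerCoeff_succ a hb, mul_assoc]
  have := hasDerivAt_tsum_mul_pow
    (fun R => hshift R ▸ (summable_kummerCoeff_mul_pow (a + 1) (by linarith) R).mul_left _) z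
  rwa [hshift, tsum_mul_left] at this

theorem kummerM_eq_add (a : ℝ) (hb : 0 < b) (z : ℝ) :
    kummerM a b z = kummerM a (b + 1) z + a / (b * (b + 1)) * z * kummerM (a + 1) (b + 2) z := by
  have h₁ := (summable_kummerCoeff_mul_pow a (b := b + 1) (by linarith) z).hasSum
  have h₂ := (summable_kummerCoeff_mul_pow (a + 1) (b := b + 2) (by linarith) z).hasSum
  rw [← hasSum_nat_add_iff' 1] at h₁
  rw [kummerM_eq_tsum a b]
  refine HasSum.tsum_eq ?_
  rw [← hasSum_nat_add_iff' 1]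
  convert h₁.add (h₂.mul_left (a / (b * (b + 1)) * z)) using 1
  · ext s
    rw [kummerCoeff_succ_eq_add a hb]
    ring
  · simp only [kummerM_eq_tsum, Finset.range_one, Finset.sum_singleton, kummerCoeff_zero,
      pow_zero, mul_one]
    ring

end KummerSeries

theorem hasDerivAt_kummerM_sq (a : ℝ) {b : ℝ} (hb : 0 < b) (x : ℝ) :
    HasDerivAt (fun y => kummerM a b (y ^ 2))
      (2 * a / b * x * kummerM (a + 1) (b + 1) (x ^ 2)) x := by
  have h := (hasDerivAt_kummerM a hb (x ^ 2)).comp x (hasDerivAt_pow 2 x)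
  exact h.congr_deriv (by push_cast; ring)

theorem hasDerivAt_const_mul_mul_kummerM_sq (a c x : ℝ) :
    HasDerivAt (fun y => c * y * kummerM a (3 / 2) (y ^ 2)) (c * kummerM a (1 / 2) (x ^ 2)) x := by
  have hcontig : kummerM a (1 / 2) (x ^ 2) =
      kummerM a (3 / 2) (x ^ 2) + 4 * a / 3 * x ^ 2 * kummerM (a + 1) (5 / 2) (x ^ 2) := by
    rw [show (3 / 2 : ℝ) = 1 / 2 + 1 by norm_num, show (5 / 2 : ℝ) = 1 / 2 + 2 by norm_num,
      kummerM_eq_add a one_half_pos]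
    ring
  refine (((hasDerivAt_id' x).const_mul c).mul
    (hasDerivAt_kummerM_sq a (b := 3 / 2) (by norm_num) x)).congr_deriv ?_
  rw [show (3 / 2 : ℝ) + 1 = 5 / 2 by norm_num, hcontig]
  ring

theorem hasDerivAt_kummerM_sq_add_mul_kummerM_sq (a a' c x : ℝ) :
    HasDerivAt (fun y => kummerM a (1 / 2) (y ^ 2) + c * y * kummerM a' (3 / 2) (y ^ 2))
      (4 * a * x * kummerM (a + 1) (3 / 2) (x ^ 2) + c * kummerM a' (1 / 2) (x ^ 2)) x := by
  have h := hasDerivAt_kummerM_sq a one_half_pos x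
  rw [show (1 / 2 : ℝ) + 1 = 3 / 2 by norm_num] at h
  exact (h.add (hasDerivAt_const_mul_mul_kummerM_sq a' c x)).congr_deriv (by ring)

theorem hasDerivAt_of_eqOn_one_div {f g : ℝ → ℝ} {g' x : ℝ} {s : Set ℝ} (hs : IsOpen s)
    (hx : x ∈ s) (hg : HasDerivAt g g' x) (hgx : g x ≠ 0) (hfg : ∀ y ∈ s, f y = 1 / g y) :
    HasDerivAt f (-g' * f x ^ 2) x := by
  have hf_eq : f =ᶠ[𝓝 x] fun y => (g y)⁻¹ := by
    filter_upwards [hs.mem_nhds hx] with y hy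
    rw [hfg y hy, one_div]
  refine ((hg.inv hgx).congr_of_eventuallyEq hf_eq).congr_deriv ?_
  rw [hf_eq.eq_of_nhds, inv_pow, neg_div, div_eq_mul_inv, neg_mul]

theorem f1_strict_anti_general (α d k h₀ : ℝ) (hα : 0 ≤ α) (hk : 0 < k) (hh : 0 < h₀)
    (f₁ : ℝ → ℝ)
    (hf₁ : ∀ x : ℝ, 0 < x → f₁ x =
      1 / (kummerM (α / 2 + 1 / 2) (1 / 2) (x ^ 2)
        + 2 * (Real.sqrt d * h₀ / k) * x * kummerM (α / 2 + 1) (3 / 2) (x ^ 2))) :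
    (∀ x : ℝ, 0 < x →
        HasDerivAt f₁
          (-(2 * (α + 1) * x * kummerM (α / 2 + 3 / 2) (3 / 2) (x ^ 2)
              + 2 * (Real.sqrt d / k) * h₀ * kummerM (α / 2 + 1) (1 / 2) (x ^ 2)) * (f₁ x) ^ 2)
          x
        ∧ deriv f₁ x < 0)
      ∧ StrictAntiOn f₁ (Set.Ioi 0) := by
  have hg_pos : ∀ x, 0 < x → 0 < kummerM (α / 2 + 1 / 2) (1 / 2) (x ^ 2)
      + 2 * (Real.sqrt d * h₀ / k) * x * kummerM (α / 2 + 1) (3 / 2) (x ^ 2) := fun x hx =>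
    add_pos_of_pos_of_nonneg (kummerM_pos (by positivity) one_half_pos (sq_nonneg x))
      (mul_nonneg (by positivity) (kummerM_pos (by positivity) (by norm_num) (sq_nonneg x)).le)
  have hg'_pos : ∀ x, 0 < x → 0 < 2 * (α + 1) * x * kummerM (α / 2 + 3 / 2) (3 / 2) (x ^ 2)
      + 2 * (Real.sqrt d / k) * h₀ * kummerM (α / 2 + 1) (1 / 2) (x ^ 2) := fun x hx =>
    add_pos_of_pos_of_nonneg
      (mul_pos (by positivity) (kummerM_pos (by positivity) (by norm_num) (sq_nonneg x)))
      (mul_nonneg (by positivity) (kummerM_pos (by positivity) one_half_pos (sq_nonneg x)).le)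
  have hf : ∀ x, 0 < x → HasDerivAt f₁
      (-(2 * (α + 1) * x * kummerM (α / 2 + 3 / 2) (3 / 2) (x ^ 2)
        + 2 * (Real.sqrt d / k) * h₀ * kummerM (α / 2 + 1) (1 / 2) (x ^ 2)) * (f₁ x) ^ 2) x :=
    fun x hx => hasDerivAt_of_eqOn_one_div isOpen_Ioi hx
      ((hasDerivAt_kummerM_sq_add_mul_kummerM_sq (α / 2 + 1 / 2) (α / 2 + 1)
        (2 * (Real.sqrt d * h₀ / k)) x).congr_deriv
          (by rw [show α / 2 + 1 / 2 + 1 = α / 2 + 3 / 2 by ring]; ring))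
      (hg_pos x hx).ne' hf₁
  have hf_deriv_neg : ∀ x, 0 < x → deriv f₁ x < 0 := fun x hx => by
    have hfx : 0 < f₁ x := (hf₁ x hx).symm ▸ one_div_pos.mpr (hg_pos x hx)
    rw [(hf x hx).deriv, neg_mul]
    exact neg_neg_of_pos (mul_pos (hg'_pos x hx) (by positivity))
  refine ⟨fun x hx => ⟨hf x hx, hf_deriv_neg x hx⟩, ?_⟩
  refine strictAntiOn_of_deriv_neg (convex_Ioi 0)
    (fun x hx => (hf x hx).continuousAt.continuousWithinAt) ?_
  simpa using hf_deriv_neg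

/-- the function `f₁` is differentiable with the given negative derivative,
hence strictly decreasing on `(0,∞)`. -/
theorem f1_strict_anti (α d k h₀ : ℝ) (hα : 0 ≤ α) (hd : 0 < d) (hk : 0 < k) (hh : 0 < h₀)
    (f₁ : ℝ → ℝ)
    (hf₁ : ∀ x : ℝ, 0 < x → f₁ x =
      1 / (kummerM (α / 2 + 1 / 2) (1 / 2) (x ^ 2)
        + 2 * (Real.sqrt d * h₀ / k) * x * kummerM (α / 2 + 1) (3 / 2) (x ^ 2))) :
    (∀ x : ℝ, 0 < x →
        HasDerivAt f₁
          (-(2 * (α + 1) * x * kummerM (α / 2 + 3 / 2) (3 / 2) (x ^ 2)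
              + 2 * (Real.sqrt d / k) * h₀ * kummerM (α / 2 + 1) (1 / 2) (x ^ 2)) * (f₁ x) ^ 2)
          x
        ∧ deriv f₁ x < 0)
      ∧ StrictAntiOn f₁ (Set.Ioi 0) :=
  f1_strict_anti_general α d k h₀ hα hk hh f₁ hf₁
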